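/- arXiv:1805.03702 — 4 statements merged into one kernel-verified Lean document; each statement's English description precedes it below -/
import Mathlib

section
/- Fix t > 0. Suppose b : ℝ × (0,t) → ℝ is measurable, b_s := ‖b(·,s)‖_∞ < ∞ for each s ∈ (0,t), and s ↦ b_s/√s is integrable on [0,t]. Then the function f(x) := ∫₀^t ds ∫_{−∞}^∞ dy p_s(x−y) b(y,s) = ∫₀^t p_s ∗ b(·,s)(x) ds is C¹ on ℝ, and f′(x) = ∫₀^t p′_s ∗ b(·,s)(x) ds, where p′_s denotes the spatial derivative of the heat kernel. -/
open MeasureTheory Filter Set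
open scoped Topology

/-- The heat kernel `p_t(x) = (4πt)^{-1/2} exp(-x²/(4t))`. -/
noncomputable def heatKernel (t x : ℝ) : ℝ :=
  Real.exp (-(x ^ 2) / (4 * t)) / Real.sqrt (4 * Real.pi * t)

/-!
For fixed `s > 0`, the spatial derivative `p_s'` is integrable, with
`∫ |p_s'| = 2 p_s(0) = (π s)^{-1/2}`, and its translates by at most `1` are dominated by a
single integrable Gaussian. Hence `x ↦ (p_s ∗ b(·,s))(x)` is `C¹` with derivative
`p_s' ∗ b(·,s)`, bounded by `‖b(·,s)‖_∞ / √(π s)`. This bound is integrable in `s` by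
hypothesis, so dominated convergence allows differentiating under the time integral and gives
continuity of the result.
-/

lemma hasDerivAt_integral_and_continuousAt_of_dominated {α E : Type*} [MeasurableSpace α]
    {μ : Measure α} [NormedAddCommGroup E] [NormedSpace ℝ E] {F F' : ℝ → α → E} {x₀ : ℝ}
    {s : Set ℝ} {bound : α → ℝ} (hs : s ∈ 𝓝 x₀) (hF_meas : ∀ x, AEStronglyMeasurable (F x) μ)
    (hF_int : Integrable (F x₀) μ) (hF'_meas : ∀ x, AEStronglyMeasurable (F' x) μ)
    (h_bound : ∀ᵐ a ∂μ, ∀ x ∈ s, ‖F' x a‖ ≤ bound a) (bound_integrable : Integrable bound μ)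
    (h_diff : ∀ᵐ a ∂μ, ∀ x ∈ s, HasDerivAt (F · a) (F' x a) x)
    (h_cont : ∀ᵐ a ∂μ, ContinuousAt (F' · a) x₀) :
    HasDerivAt (fun x => ∫ a, F x a ∂μ) (∫ a, F' x₀ a ∂μ) x₀ ∧
      ContinuousAt (fun x => ∫ a, F' x a ∂μ) x₀ := by
  refine ⟨(hasDerivAt_integral_of_dominated_loc_of_deriv_le hs (.of_forall hF_meas) hF_int
    (hF'_meas x₀) h_bound bound_integrable h_diff).2, ?_⟩
  refine continuousAt_of_dominated (.of_forall hF'_meas) ?_ bound_integrable h_cont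
  filter_upwards [hs] with x hx
  filter_upwards [h_bound] with a ha using ha x hx

lemma norm_integral_comp_sub_mul_le {k c : ℝ → ℝ} (hk : Integrable k) {M : ℝ}
    (hc : ∀ y, |c y| ≤ M) (x : ℝ) : ‖∫ y, k (x - y) * c y‖ ≤ M * ∫ w, |k w| := by
  calc ‖∫ y, k (x - y) * c y‖ ≤ ∫ y, M * |k (x - y)| := by
        refine norm_integral_le_of_norm_le ((hk.abs.comp_sub_left x).const_mul M)
          (.of_forall fun y => ?_)
        rw [Real.norm_eq_abs, abs_mul, mul_comm]
        exact mul_le_mul_of_nonneg_right (hc y) (abs_nonneg _)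
    _ = M * ∫ w, |k w| := by
        rw [integral_const_mul, integral_sub_left_eq_self (fun w => |k w|)]

lemma integrableOn_Ioo_of_integrableOn_div_sqrt {f : ℝ → ℝ} {t : ℝ}
    (hf : IntegrableOn (fun s => f s / Real.sqrt s) (Ioo 0 t)) : IntegrableOn f (Ioo 0 t) := by
  have hmem : ∀ᵐ s ∂volume.restrict (Ioo (0 : ℝ) t), s ∈ Ioo 0 t :=
    ae_restrict_mem measurableSet_Ioo
  have hf_eq : ∀ᵐ s ∂volume.restrict (Ioo (0 : ℝ) t), Real.sqrt s * (f s / Real.sqrt s) = f s := by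
    filter_upwards [hmem] with s hs
    exact mul_div_cancel₀ _ (Real.sqrt_pos.2 hs.1).ne'
  refine (hf.norm.const_mul (Real.sqrt t)).mono'
    ((Real.continuous_sqrt.aestronglyMeasurable.mul hf.1).congr hf_eq) ?_
  filter_upwards [hmem, hf_eq] with s hs hs_eq
  calc ‖f s‖ = Real.sqrt s * ‖f s / Real.sqrt s‖ := by
        rw [← hs_eq, norm_mul, Real.norm_of_nonneg (Real.sqrt_nonneg s), hs_eq]
    _ ≤ Real.sqrt t * ‖f s / Real.sqrt s‖ := by gcongr; exact hs.2.le

lemma heatKernel_nonneg (s x : ℝ) : 0 ≤ heatKernel s x :=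
  div_nonneg (Real.exp_pos _).le (Real.sqrt_nonneg _)

lemma continuous_heatKernel (s : ℝ) : Continuous (heatKernel s) := by
  unfold heatKernel
  fun_prop

lemma measurable_heatKernel_uncurry : Measurable fun p : ℝ × ℝ => heatKernel p.1 p.2 := by
  unfold heatKernel
  fun_prop

lemma heatKernel_eq_gaussian (s : ℝ) :
    heatKernel s = fun x => Real.exp (-(1 / (4 * s)) * x ^ 2) / Real.sqrt (4 * Real.pi * s) := by
  ext x
  unfold heatKernel
  ring_nf

lemma integrable_heatKernel {s : ℝ} (hs : 0 < s) : Integrable (heatKernel s) := by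
  rw [heatKernel_eq_gaussian]
  exact (integrable_exp_neg_mul_sq (by positivity)).div_const _

lemma integral_heatKernel {s : ℝ} (hs : 0 < s) : ∫ x, heatKernel s x = 1 := by
  rw [heatKernel_eq_gaussian, integral_div, integral_gaussian, div_eq_one_iff_eq (by positivity)]
  congr 1
  field_simp

lemma tendsto_heatKernel_atTop {s : ℝ} (hs : 0 < s) : Tendsto (heatKernel s) atTop (𝓝 0) := by
  rw [heatKernel_eq_gaussian]
  have h : Tendsto (fun x : ℝ => -(1 / (4 * s)) * x ^ 2) atTop atBot :=
    (tendsto_pow_atTop two_ne_zero).const_mul_atTop_of_neg (by simp [hs])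
  simpa using (Real.tendsto_exp_atBot.comp h).div_const (Real.sqrt (4 * Real.pi * s))

-- No sign condition on `s`: for `s ≤ 0` the junk value `√(4πs) = 0` makes both sides vanish.
lemma hasDerivAt_heatKernel (s w : ℝ) :
    HasDerivAt (heatKernel s) (-(w / (2 * s)) * heatKernel s w) w := by
  have h : HasDerivAt (fun x : ℝ => -(x ^ 2) / (4 * s)) (-(2 * w) / (4 * s)) w := by
    simpa using (hasDerivAt_pow 2 w).neg.div_const (4 * s)
  refine (h.exp.div_const _).congr_deriv ?_
  unfold heatKernel
  ring

lemma deriv_heatKernel (s : ℝ) :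
    deriv (heatKernel s) = fun w => -(w / (2 * s)) * heatKernel s w :=
  funext fun w => (hasDerivAt_heatKernel s w).deriv

lemma continuous_deriv_heatKernel (s : ℝ) : Continuous (deriv (heatKernel s)) := by
  rw [deriv_heatKernel]
  have := continuous_heatKernel s
  fun_prop

lemma measurable_deriv_heatKernel_uncurry :
    Measurable fun p : ℝ × ℝ => deriv (heatKernel p.1) p.2 := by
  simp only [deriv_heatKernel]
  have := measurable_heatKernel_uncurry
  fun_prop

lemma integrable_deriv_heatKernel {s : ℝ} (hs : 0 < s) : Integrable (deriv (heatKernel s)) := by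
  have h := (integrable_mul_exp_neg_mul_sq (by positivity : 0 < 1 / (4 * s))).const_mul
    (-(1 / (2 * s * Real.sqrt (4 * Real.pi * s))))
  rw [deriv_heatKernel]
  refine h.congr (.of_forall fun w => ?_)
  simp only [heatKernel_eq_gaussian]
  ring

/-- `p_s` is even and decreasing on `[0, ∞)`, so `∫ |p_s'| = -2 ∫_{(0, ∞)} p_s'`. -/
lemma integral_abs_deriv_heatKernel {s : ℝ} (hs : 0 < s) :
    ∫ w, |deriv (heatKernel s) w| = 2 * heatKernel s 0 := by
  have heven : ∀ w, |deriv (heatKernel s) (|w|)| = |deriv (heatKernel s) w| := by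
    intro w
    simp only [deriv_heatKernel, heatKernel, abs_mul, abs_neg, abs_div, abs_abs, sq_abs]
  have hhalf : ∫ w in Ioi (0 : ℝ), deriv (heatKernel s) w = 0 - heatKernel s 0 :=
    integral_Ioi_of_hasDerivAt_of_tendsto'
      (fun w _ => (hasDerivAt_heatKernel s w).differentiableAt.hasDerivAt)
      (integrable_deriv_heatKernel hs).integrableOn (tendsto_heatKernel_atTop hs)
  have hsign : ∫ w in Ioi (0 : ℝ), |deriv (heatKernel s) w|
      = -∫ w in Ioi (0 : ℝ), deriv (heatKernel s) w := by
    rw [← integral_neg]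
    refine setIntegral_congr_fun measurableSet_Ioi fun w (hw : 0 < w) => abs_of_nonpos ?_
    rw [deriv_heatKernel]
    exact mul_nonpos_of_nonpos_of_nonneg (neg_nonpos.2 (by positivity)) (heatKernel_nonneg s w)
  rw [← integral_congr_ae (.of_forall heven),
    integral_comp_abs (f := fun w => |deriv (heatKernel s) w|), hsign, hhalf]
  ring

lemma heatKernel_zero (s : ℝ) :
    heatKernel s 0 = (2 * Real.sqrt Real.pi * Real.sqrt s)⁻¹ := by
  rw [heatKernel, Real.sqrt_mul (by positivity), Real.sqrt_mul (by norm_num),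
    show Real.sqrt 4 = 2 by rw [show (4 : ℝ) = 2 ^ 2 by norm_num, Real.sqrt_sq (by norm_num)]]
  simp

lemma heatKernel_add_le {s : ℝ} (hs : 0 < s) (w : ℝ) {h : ℝ} (hh : |h| ≤ 1) :
    heatKernel s (w + h) ≤
      Real.exp (1 / (4 * s)) * Real.exp (-(1 / (8 * s)) * w ^ 2) / Real.sqrt (4 * Real.pi * s) := by
  have hh2 : h ^ 2 ≤ 1 := by nlinarith [sq_abs h, abs_nonneg h]
  have hw : w ^ 2 ≤ 2 * (w + h) ^ 2 + 2 := by nlinarith [sq_nonneg (w + 2 * h)]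
  unfold heatKernel
  rw [← Real.exp_add]
  gcongr
  rw [div_le_iff₀ (by positivity)]
  field_simp
  nlinarith

lemma exists_integrable_bound_deriv_heatKernel {s : ℝ} (hs : 0 < s) :
    ∃ g : ℝ → ℝ, Integrable g ∧ ∀ w h, |h| ≤ 1 → |deriv (heatKernel s) (w + h)| ≤ g w := by
  set C := Real.exp (1 / (4 * s)) / (2 * s * Real.sqrt (4 * Real.pi * s))
  have hb : 0 < 1 / (8 * s) := by positivity
  refine ⟨fun w =>
      C * (|w * Real.exp (-(1 / (8 * s)) * w ^ 2)| + Real.exp (-(1 / (8 * s)) * w ^ 2)),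
    ((integrable_mul_exp_neg_mul_sq hb).abs.add (integrable_exp_neg_mul_sq hb)).const_mul C,
    fun w h hh => ?_⟩
  have hwh : |w + h| ≤ |w| + 1 := (abs_add_le w h).trans (by linarith)
  rw [deriv_heatKernel, abs_mul, abs_neg, abs_div, abs_of_pos (by positivity : 0 < 2 * s),
    abs_of_nonneg (heatKernel_nonneg s _)]
  dsimp only
  rw [abs_mul, abs_of_pos (Real.exp_pos _)]
  calc |w + h| / (2 * s) * heatKernel s (w + h)
      ≤ (|w| + 1) / (2 * s) * (Real.exp (1 / (4 * s)) * Real.exp (-(1 / (8 * s)) * w ^ 2) /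
          Real.sqrt (4 * Real.pi * s)) := by
        gcongr
        · exact heatKernel_nonneg s _
        · exact heatKernel_add_le hs w hh
    _ = C * (|w| * Real.exp (-(1 / (8 * s)) * w ^ 2) + Real.exp (-(1 / (8 * s)) * w ^ 2)) := by
        simp only [C]
        ring

lemma hasDerivAt_integral_heatKernel_mul_and_continuousAt {s : ℝ} {c : ℝ → ℝ} {M : ℝ}
    (hs : 0 < s) (hc : AEStronglyMeasurable c) (hM : ∀ y, |c y| ≤ M) (x₀ : ℝ) :
    HasDerivAt (fun x => ∫ y, heatKernel s (x - y) * c y)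
        (∫ y, deriv (heatKernel s) (x₀ - y) * c y) x₀ ∧
      ContinuousAt (fun x => ∫ y, deriv (heatKernel s) (x - y) * c y) x₀ := by
  obtain ⟨g, hg, hbound⟩ := exists_integrable_bound_deriv_heatKernel hs
  have hmeas {k : ℝ → ℝ} (hk : Continuous k) (x : ℝ) :
      AEStronglyMeasurable (fun y => k (x - y) * c y) :=
    (hk.comp (continuous_const.sub continuous_id)).aestronglyMeasurable.mul hc
  refine hasDerivAt_integral_and_continuousAt_of_dominated (Metric.closedBall_mem_nhds x₀ one_pos)
    (hmeas (continuous_heatKernel s))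
    (((integrable_heatKernel hs).comp_sub_left x₀).mul_bdd hc (.of_forall hM))
    (hmeas (continuous_deriv_heatKernel s)) (bound := fun y => g (x₀ - y) * M) ?_
    ((hg.comp_sub_left x₀).mul_const M) ?_ ?_
  · refine .of_forall fun y x hx => ?_
    rw [Real.norm_eq_abs, abs_mul, show x - y = (x₀ - y) + (x - x₀) by ring]
    exact mul_le_mul (hbound _ _ (by simpa [Real.dist_eq] using hx)) (hM y) (abs_nonneg _)
      ((abs_nonneg _).trans (hbound _ _ (by simpa [Real.dist_eq] using hx)))
  · refine .of_forall fun y x _ => ?_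
    rw [deriv_heatKernel]
    exact ((hasDerivAt_heatKernel s (x - y)).comp_sub_const x y).mul_const (c y)
  · exact .of_forall fun y =>
      (((continuous_deriv_heatKernel s).comp (continuous_id.sub continuous_const)).mul
        continuous_const).continuousAt

theorem hasDerivAt_integral_integral_heatKernel_mul {μ : Measure ℝ} {b : ℝ → ℝ → ℝ}
    {B : ℝ → ℝ} (hb : Measurable fun p : ℝ × ℝ => b p.1 p.2) (hpos : ∀ᵐ s ∂μ, 0 < s)
    (hbB : ∀ᵐ s ∂μ, ∀ y, |b y s| ≤ B s) (hB : Integrable B μ)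
    (hB_sqrt : Integrable (fun s => B s / Real.sqrt s) μ) :
    (∀ x, HasDerivAt (fun x => ∫ s, (∫ y, heatKernel s (x - y) * b y s) ∂μ)
        (∫ s, (∫ y, deriv (heatKernel s) (x - y) * b y s) ∂μ) x) ∧
      Continuous fun x => ∫ s, (∫ y, deriv (heatKernel s) (x - y) * b y s) ∂μ := by
  have hmeas {k : ℝ → ℝ → ℝ} (hk : Measurable fun p : ℝ × ℝ => k p.1 p.2) (x : ℝ) :
      AEStronglyMeasurable (fun s => ∫ y, k s (x - y) * b y s) μ := by
    have : Measurable fun p : ℝ × ℝ => k p.1 (x - p.2) * b p.2 p.1 := by fun_prop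
    exact this.stronglyMeasurable.integral_prod_right'.aestronglyMeasurable
  have hinner : ∀ᵐ s ∂μ, ∀ x₀,
      HasDerivAt (fun x => ∫ y, heatKernel s (x - y) * b y s)
          (∫ y, deriv (heatKernel s) (x₀ - y) * b y s) x₀ ∧
        ContinuousAt (fun x => ∫ y, deriv (heatKernel s) (x - y) * b y s) x₀ := by
    filter_upwards [hpos, hbB] with s hs hsB
    exact hasDerivAt_integral_heatKernel_mul_and_continuousAt hs (by fun_prop) hsB
  have hint (x : ℝ) : Integrable (fun s => ∫ y, heatKernel s (x - y) * b y s) μ := by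
    refine hB.mono' (hmeas measurable_heatKernel_uncurry x) ?_
    filter_upwards [hpos, hbB] with s hs hsB
    simpa [abs_of_nonneg (heatKernel_nonneg s _), integral_heatKernel hs] using
      norm_integral_comp_sub_mul_le (integrable_heatKernel hs) hsB x
  have hbound : ∀ᵐ s ∂μ, ∀ x ∈ univ,
      ‖∫ y, deriv (heatKernel s) (x - y) * b y s‖ ≤
        (Real.sqrt Real.pi)⁻¹ * (B s / Real.sqrt s) := by
    filter_upwards [hpos, hbB] with s hs hsB x _
    have := norm_integral_comp_sub_mul_le (integrable_deriv_heatKernel hs) hsB x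
    rw [integral_abs_deriv_heatKernel hs, heatKernel_zero] at this
    exact this.trans_eq (by ring)
  have hx₀ (x₀ : ℝ) := hasDerivAt_integral_and_continuousAt_of_dominated univ_mem
    (hmeas measurable_heatKernel_uncurry) (hint x₀) (hmeas measurable_deriv_heatKernel_uncurry)
    hbound (hB_sqrt.const_mul _) (by filter_upwards [hinner] with s hs x _ using (hs x).1)
    (by filter_upwards [hinner] with s hs using (hs x₀).2)
  exact ⟨fun x₀ => (hx₀ x₀).1, continuous_iff_continuousAt.2 fun x₀ => (hx₀ x₀).2⟩

theorem statement_9_general (t : ℝ) (b : ℝ → ℝ → ℝ)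
    (hbmeas : Measurable fun p : ℝ × ℝ => b p.1 p.2)
    (hbdd : ∀ s ∈ Set.Ioo (0 : ℝ) t, BddAbove (Set.range fun y => |b y s|))
    (hint : IntegrableOn (fun s => (⨆ y, |b y s|) / Real.sqrt s) (Set.Ioo 0 t)) :
    ContDiff ℝ 1 (fun x => ∫ s in Set.Ioc (0 : ℝ) t, ∫ y, heatKernel s (x - y) * b y s) ∧
    ∀ x, deriv (fun x => ∫ s in Set.Ioc (0 : ℝ) t, ∫ y, heatKernel s (x - y) * b y s) x
      = ∫ s in Set.Ioc (0 : ℝ) t, ∫ y, deriv (heatKernel s) (x - y) * b y s := by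
  have hmem : ∀ᵐ s ∂volume.restrict (Ioo (0 : ℝ) t), s ∈ Ioo 0 t :=
    ae_restrict_mem measurableSet_Ioo
  obtain ⟨hderiv, hcont⟩ := hasDerivAt_integral_integral_heatKernel_mul hbmeas
    (by filter_upwards [hmem] with s hs using hs.1)
    (by filter_upwards [hmem] with s hs y using le_ciSup (hbdd s hs) y)
    (integrableOn_Ioo_of_integrableOn_div_sqrt hint) hint
  simp only [integral_Ioc_eq_integral_Ioo]
  have hderiv_eq := funext fun x => (hderiv x).deriv
  exact ⟨contDiff_one_iff_deriv.2 ⟨fun x => (hderiv x).differentiableAt, hderiv_eq ▸ hcont⟩,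
    congrFun hderiv_eq⟩

theorem statement_9 (t : ℝ) (ht : 0 < t) (b : ℝ → ℝ → ℝ)
    (hbmeas : Measurable fun p : ℝ × ℝ => b p.1 p.2)
    (hbdd : ∀ s ∈ Set.Ioo (0 : ℝ) t, BddAbove (Set.range fun y => |b y s|))
    (hint : IntegrableOn (fun s => (⨆ y, |b y s|) / Real.sqrt s) (Set.Ioo 0 t)) :
    ContDiff ℝ 1 (fun x => ∫ s in Set.Ioc (0 : ℝ) t, ∫ y, heatKernel s (x - y) * b y s) ∧
    ∀ x, deriv (fun x => ∫ s in Set.Ioc (0 : ℝ) t, ∫ y, heatKernel s (x - y) * b y s) x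
      = ∫ s in Set.Ioc (0 : ℝ) t, ∫ y, deriv (heatKernel s) (x - y) * b y s :=
  statement_9_general t b hbmeas hbdd hint
end

section
/- Let v : ℝ → [0,1] be a non-increasing function with v(x) → 0 as x → ∞ and v(x) → 1 as x → −∞, and let (u, μ) be a classical solution of (FBP) with initial condition v. Then for every t > 0, μ_t = inf{x ∈ ℝ : u(x,t) < 1}. -/
open MeasureTheory Filter Set
open scoped Topology

/-- Spatial derivative `∂_x u`. -/
noncomputable def dX (u : ℝ → ℝ → ℝ) (x t : ℝ) : ℝ := deriv (fun y => u y t) x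

/-- Second spatial derivative `∂²_x u`. -/
noncomputable def dXX (u : ℝ → ℝ → ℝ) (x t : ℝ) : ℝ := deriv (fun y => dX u y t) x

/-- Time derivative `∂_t u`. -/
noncomputable def dT (u : ℝ → ℝ → ℝ) (x t : ℝ) : ℝ := deriv (fun s => u x s) t

/-- `(u, μ)` is a classical solution of the free boundary problem (FBP) with initial
condition `v`:  `μ_t ∈ ℝ` with `t ↦ μ_t` continuous on `(0,∞)`; `u` takes values in `[0,1]`
and is continuous on `ℝ × (0,∞)`, is `C^{2,1}` on `{(x,t) : t > 0, x > μ_t}` where it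
satisfies `∂_t u = ∂²_x u + u`; `u(x,t) = 1` for `x ≤ μ_t`; `∂_x u(μ_t,t) = 0`; and
`u(·,t) → v` in `L¹_loc` as `t ↓ 0`. -/
def IsFBPSolution (v : ℝ → ℝ) (u : ℝ → ℝ → ℝ) (μ : ℝ → ℝ) : Prop :=
  ContinuousOn μ (Set.Ioi 0) ∧
  (∀ x t, 0 < t → u x t ∈ Set.Icc (0 : ℝ) 1) ∧
  ContinuousOn (fun p : ℝ × ℝ => u p.1 p.2) {p : ℝ × ℝ | 0 < p.2} ∧
  (∀ x t, 0 < t → μ t < x →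
    DifferentiableAt ℝ (fun y => u y t) x ∧
    DifferentiableAt ℝ (fun y => dX u y t) x ∧
    DifferentiableAt ℝ (fun s => u x s) t) ∧
  ContinuousOn (fun p : ℝ × ℝ => dX u p.1 p.2) {p : ℝ × ℝ | 0 < p.2 ∧ μ p.2 < p.1} ∧
  ContinuousOn (fun p : ℝ × ℝ => dXX u p.1 p.2) {p : ℝ × ℝ | 0 < p.2 ∧ μ p.2 < p.1} ∧
  ContinuousOn (fun p : ℝ × ℝ => dT u p.1 p.2) {p : ℝ × ℝ | 0 < p.2 ∧ μ p.2 < p.1} ∧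
  (∀ x t, 0 < t → μ t < x → dT u x t = dXX u x t + u x t) ∧
  (∀ x t, 0 < t → x ≤ μ t → u x t = 1) ∧
  (∀ t, 0 < t → HasDerivAt (fun y => u y t) 0 (μ t)) ∧
  (∀ A : ℝ, 0 < A →
    Tendsto (fun t => ∫ x in Set.Icc (-A) A, |u x t - v x|) (𝓝[>] (0 : ℝ)) (𝓝 0))

/-- `μ₀ = inf {x : v x < 1} ∈ ℝ ∪ {-∞}`, as an extended real number. -/
noncomputable def muZero (v : ℝ → ℝ) : EReal :=
  sInf ((fun x : ℝ => (x : EReal)) '' {x : ℝ | v x < 1})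

/-!
Left of the free boundary `u(·, t) ≡ 1`, so `{x : u(x,t) < 1}` lies in `(μ_t, ∞)`. Conversely,
`u(·, t)` cannot be `≡ 1` on an open set `U` to the right of `μ_t`: there `∂²_x u = 0`, and since
`u ≤ 1` the time `t` is a maximum of `s ↦ u(x, s)`, so `∂_t u = 0`; the equation
`∂_t u = ∂²_x u + u` would then read `0 = 0 + 1`. Hence `{u(·, t) < 1}` accumulates at `μ_t`.
-/

namespace IsFBPSolution

variable {v : ℝ → ℝ} {u : ℝ → ℝ → ℝ} {μ : ℝ → ℝ}

theorem lt_of_lt_one (hsol : IsFBPSolution v u μ) {x t : ℝ} (ht : 0 < t) (hx : u x t < 1) :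
    μ t < x := by
  obtain ⟨-, -, -, -, -, -, -, -, hleft, -⟩ := hsol
  by_contra! hxμ
  exact hx.ne (hleft x t ht hxμ)

theorem exists_lt_one_of_isOpen (hsol : IsFBPSolution v u μ) {t : ℝ} (ht : 0 < t)
    {U : Set ℝ} (hU : IsOpen U) {x : ℝ} (hxU : x ∈ U) (hx : μ t < x) :
    ∃ y ∈ U, u y t < 1 := by
  obtain ⟨-, hbound, -, -, -, -, -, hpde, -⟩ := hsol
  by_contra! hU1
  have hone : ∀ y ∈ U, u y t = 1 := fun y hy => le_antisymm (hbound y t ht).2 (hU1 y hy)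
  have hspace : (fun y => u y t) =ᶠ[𝓝 x] fun _ => 1 :=
    eventuallyEq_of_mem (hU.mem_nhds hxU) hone
  have hdXX : dXX u x t = 0 :=
    hspace.deriv.deriv_eq.trans (by simp)
  have hdT : dT u x t = 0 := by
    have hmax : IsLocalMax (fun s => u x s) t := by
      filter_upwards [eventually_gt_nhds ht] with s hs
      exact (hone x hxU).symm ▸ (hbound x s hs).2
    exact hmax.deriv_eq_zero
  have hheat := hpde x t ht hx
  rw [hdT, hdXX, hone x hxU] at hheat
  norm_num at hheat

end IsFBPSolution

theorem statement_15_general (v : ℝ → ℝ)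
    (u : ℝ → ℝ → ℝ) (μ : ℝ → ℝ)
    (hsol : IsFBPSolution v u μ) :
    ∀ t, 0 < t →
      {x : ℝ | u x t < 1}.Nonempty ∧ BddBelow {x : ℝ | u x t < 1} ∧
      μ t = sInf {x : ℝ | u x t < 1} := by
  intro t ht
  have hlower : ∀ x ∈ {x : ℝ | u x t < 1}, μ t ≤ x := fun x hx => (hsol.lt_of_lt_one ht hx).le
  have hnear : ∀ w, μ t < w → ∃ x ∈ {x : ℝ | u x t < 1}, x < w := by
    intro w hw
    obtain ⟨y, hy, hy1⟩ := hsol.exists_lt_one_of_isOpen ht (isOpen_Ioo (a := μ t) (b := w))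
      (x := (μ t + w) / 2) ⟨by linarith, by linarith⟩ (by linarith)
    exact ⟨y, hy1, hy.2⟩
  obtain ⟨x₀, hx₀, -⟩ := hnear (μ t + 1) (lt_add_one _)
  exact ⟨⟨x₀, hx₀⟩, ⟨μ t, hlower⟩,
    (csInf_eq_of_forall_ge_of_forall_gt_exists_lt ⟨x₀, hx₀⟩ hlower hnear).symm⟩

theorem statement_15 (v : ℝ → ℝ)
    (hv01 : ∀ x, v x ∈ Set.Icc (0 : ℝ) 1)
    (hvmono : Antitone v)
    (hvtop : Tendsto v atTop (𝓝 0))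
    (hvbot : Tendsto v atBot (𝓝 1))
    (u : ℝ → ℝ → ℝ) (μ : ℝ → ℝ)
    (hsol : IsFBPSolution v u μ) :
    ∀ t, 0 < t →
      {x : ℝ | u x t < 1}.Nonempty ∧ BddBelow {x : ℝ | u x t < 1} ∧
      μ t = sInf {x : ℝ | u x t < 1} :=
  statement_15_general v u μ hsol
end

section
/- Let v : ℝ → [0,1] be a non-increasing function with v(x) → 0 as x → ∞ and v(x) → 1 as x → −∞, with μ₀ := inf{x ∈ ℝ : v(x) < 1} ∈ ℝ ∪ {−∞}. Then for every δ > 0, every integer n ≥ 0 and every A ≥ 1/2, one has ∫_{−A}^{A} |u^{n,δ,+}(x) − u^{n,δ,−}(x)| dx ≤ 4A(1 + e^{δn})(e^δ − 1). -/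
open MeasureTheory Filter Set
open scoped Topology

/-- The heat semigroup `G_t f = p_t ∗ f`. -/
noncomputable def Gop (t : ℝ) (f : ℝ → ℝ) (x : ℝ) : ℝ := ∫ y, heatKernel t (x - y) * f y

/-- The cut operator `C_m f = min(f, m)`. -/
def Cop (m : ℝ) (f : ℝ → ℝ) (x : ℝ) : ℝ := min (f x) m

/-- `u^{n,δ,-} = [e^δ G_δ C_{e^{-δ}}]ⁿ v`. -/
noncomputable def uLower (v : ℝ → ℝ) (δ : ℝ) : ℕ → ℝ → ℝ
  | 0 => v
  | n + 1 => fun x => Real.exp δ * Gop δ (Cop (Real.exp (-δ)) (uLower v δ n)) x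

/-- `u^{n,δ,+} = [C₁ e^δ G_δ]ⁿ v⁺`. -/
noncomputable def uUpper (vplus : ℝ → ℝ) (δ : ℝ) : ℕ → ℝ → ℝ
  | 0 => vplus
  | n + 1 => Cop 1 (fun x => Real.exp δ * Gop δ (uUpper vplus δ n) x)

/-!
Write `a = u^{n,δ,-}`, `c = u^{n,δ,+}` and `b = [C₁ e^δ G_δ]ⁿ v`, the upper scheme started from `v`
itself. The heat semigroup is order preserving, commutes with translations and with adding
constants, and keeps antitone `[0, m]`-valued data antitone and `[0, m]`-valued; by induction
`a ≤ b ≤ e^δ a` and `b ≤ c`. Hence `|c - a| = (c - b) + (b - a)` with `b - a ≤ e^δ - 1`.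
If `μ₀ ∈ ℝ` then `v^{δ,+} ≤ v(· - δ)`, so `c ≤ b(· - δ)`, and for an antitone `[0, 1]`-valued `b`
the integral of `b(· - δ) - b` over any interval is at most `δ`. If `μ₀ = -∞` then
`v^{δ,+} ≤ v + δ`, and this gap grows by at most a factor `e^δ` per step.
-/

namespace HeatSemigroup

variable {t : ℝ}

lemma heatKernel_nonneg (x : ℝ) : 0 ≤ heatKernel t x :=
  div_nonneg (Real.exp_nonneg _) (Real.sqrt_nonneg _)

lemma heatKernel_eq_gaussian :
    heatKernel t = fun x => Real.exp (-(1 / (4 * t)) * x ^ 2) / Real.sqrt (4 * Real.pi * t) := by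
  ext x
  rw [heatKernel]
  ring_nf

lemma integrable_heatKernel (ht : 0 < t) : Integrable (heatKernel t) := by
  rw [heatKernel_eq_gaussian]
  exact (integrable_exp_neg_mul_sq (by positivity)).div_const _

lemma integral_heatKernel (ht : 0 < t) : ∫ x, heatKernel t x = 1 := by
  rw [heatKernel_eq_gaussian, integral_div, integral_gaussian,
    show Real.pi / (1 / (4 * t)) = 4 * Real.pi * t by field_simp]
  exact div_self (Real.sqrt_pos.mpr (by positivity)).ne'

lemma integrable_heatKernel_sub_mul (ht : 0 < t) {f : ℝ → ℝ} (hf : MemLp f ⊤) (x : ℝ) :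
    Integrable (fun y => heatKernel t (x - y) * f y) :=
  ((integrable_heatKernel ht).comp_sub_left x).mul_of_top_left hf

lemma Gop_mono (ht : 0 < t) {f g : ℝ → ℝ} (hf : MemLp f ⊤) (hg : MemLp g ⊤) (hfg : f ≤ g) :
    Gop t f ≤ Gop t g := fun x =>
  integral_mono (integrable_heatKernel_sub_mul ht hf x) (integrable_heatKernel_sub_mul ht hg x)
    fun y => mul_le_mul_of_nonneg_left (hfg y) (heatKernel_nonneg _)

lemma Gop_nonneg {f : ℝ → ℝ} (hf : 0 ≤ f) : 0 ≤ Gop t f := fun _ =>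
  integral_nonneg fun y => mul_nonneg (heatKernel_nonneg _) (hf y)

lemma Gop_add_const (ht : 0 < t) {f : ℝ → ℝ} (hf : MemLp f ⊤) (c x : ℝ) :
    Gop t (fun y => f y + c) x = Gop t f x + c := by
  simp only [Gop, mul_add]
  rw [integral_add (integrable_heatKernel_sub_mul ht hf x)
      (((integrable_heatKernel ht).comp_sub_left x).mul_const c),
    integral_mul_const, integral_sub_left_eq_self (heatKernel t) volume x,
    integral_heatKernel ht, one_mul]

lemma Gop_const (ht : 0 < t) (c x : ℝ) : Gop t (fun _ => c) x = c := by
  simpa [Gop] using Gop_add_const ht (memLp_top_const 0) c x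

lemma Gop_le_of_le (ht : 0 < t) {f : ℝ → ℝ} (hf : MemLp f ⊤) {c : ℝ} (hfc : ∀ y, f y ≤ c)
    (x : ℝ) : Gop t f x ≤ c :=
  (Gop_mono ht hf (memLp_top_const c) hfc x).trans_eq (Gop_const ht c x)

lemma Gop_const_mul (a : ℝ) (f : ℝ → ℝ) (x : ℝ) :
    Gop t (fun y => a * f y) x = a * Gop t f x := by
  simp only [Gop, ← integral_const_mul, mul_left_comm]

lemma Gop_comp_sub (f : ℝ → ℝ) (s x : ℝ) :
    Gop t (fun y => f (y - s)) x = Gop t f (x - s) := by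
  rw [Gop, ← integral_add_right_eq_self _ s]
  simp only [add_sub_cancel_right, Gop, sub_add_eq_sub_sub_swap]

-- Translating an antitone datum to the right lowers it, and translation commutes with `Gop`.
lemma Gop_antitone (ht : 0 < t) {f : ℝ → ℝ} (hf : MemLp f ⊤) (hf' : Antitone f) :
    Antitone (Gop t f) := by
  intro x₁ x₂ hx
  have h := Gop_mono ht (f := fun y => f (y - (x₁ - x₂)))
    (hf.comp_measurePreserving (measurePreserving_sub_right volume _)) hf
    (fun y => hf' (by linarith : y ≤ y - (x₁ - x₂))) x₁
  rwa [Gop_comp_sub, sub_sub_cancel] at h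

end HeatSemigroup

open HeatSemigroup

structure IsFront (c : ℝ) (f : ℝ → ℝ) : Prop where
  antitone : Antitone f
  nonneg : ∀ x, 0 ≤ f x
  le : ∀ x, f x ≤ c

namespace IsFront

variable {c : ℝ} {f : ℝ → ℝ}

lemma memLp_top (hf : IsFront c f) : MemLp f ⊤ :=
  memLp_top_of_bound hf.antitone.measurable.aestronglyMeasurable c
    (.of_forall fun x => by rw [Real.norm_of_nonneg (hf.nonneg x)]; exact hf.le x)

lemma mono (hf : IsFront c f) {c' : ℝ} (hc : c ≤ c') : IsFront c' f :=
  ⟨hf.antitone, hf.nonneg, fun x => (hf.le x).trans hc⟩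

lemma comp_sub (hf : IsFront c f) (s : ℝ) : IsFront c (fun x => f (x - s)) :=
  ⟨fun _ _ h => hf.antitone (sub_le_sub_right h s), fun _ => hf.nonneg _, fun _ => hf.le _⟩

lemma const_mul (hf : IsFront c f) {a : ℝ} (ha : 0 ≤ a) : IsFront (a * c) (fun x => a * f x) :=
  ⟨fun _ _ h => mul_le_mul_of_nonneg_left (hf.antitone h) ha,
    fun x => mul_nonneg ha (hf.nonneg x), fun x => mul_le_mul_of_nonneg_left (hf.le x) ha⟩

lemma cop (hf : IsFront c f) {m : ℝ} (hm : 0 ≤ m) : IsFront m (Cop m f) :=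
  ⟨fun _ _ h => min_le_min_right m (hf.antitone h), fun x => le_min (hf.nonneg x) hm,
    fun _ => min_le_right _ _⟩

lemma gop {t : ℝ} (ht : 0 < t) (hf : IsFront c f) : IsFront c (Gop t f) :=
  ⟨Gop_antitone ht hf.memLp_top hf.antitone, Gop_nonneg hf.nonneg,
    Gop_le_of_le ht hf.memLp_top hf.le⟩

end IsFront

lemma intervalIntegral_le_sub_mul {f : ℝ → ℝ} {a b C : ℝ} (hab : a ≤ b)
    (hf : IntervalIntegrable f volume a b) (h : ∀ x, f x ≤ C) :
    ∫ x in a..b, f x ≤ (b - a) * C := by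
  have := intervalIntegral.integral_mono_on hab hf intervalIntegrable_const fun x _ => h x
  rwa [intervalIntegral.integral_const, smul_eq_mul] at this

lemma IsFront.intervalIntegral_comp_sub_sub_le {c : ℝ} {f : ℝ → ℝ} (hf : IsFront c f) {s : ℝ}
    (hs : 0 ≤ s) (a b : ℝ) : ∫ x in a..b, (f (x - s) - f x) ≤ s * c := by
  have hii : ∀ p q, IntervalIntegrable f volume p q := fun _ _ => hf.antitone.intervalIntegrable
  -- both integrals share `∫ x in a..b-s, f`; what remains is a window of length `s` on each side
  have hleft : ∫ x in (a - s)..a, f x ≤ s * c := by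
    simpa using intervalIntegral_le_sub_mul (a := a - s) (b := a) (by linarith) (hii _ _) hf.le
  have hright : 0 ≤ ∫ x in (b - s)..b, f x :=
    intervalIntegral.integral_nonneg (by linarith) fun x _ => hf.nonneg x
  rw [intervalIntegral.integral_sub (hf.comp_sub s).antitone.intervalIntegrable (hii _ _),
    intervalIntegral.integral_comp_sub_right,
    ← intervalIntegral.integral_add_adjacent_intervals (hii _ a) (hii a _),
    ← intervalIntegral.integral_add_adjacent_intervals (hii a (b - s)) (hii _ b)]
  linarith

section Iterates

variable {δ : ℝ}

lemma uUpper_succ (w : ℝ → ℝ) (n : ℕ) (x : ℝ) :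
    uUpper w δ (n + 1) x = min (Real.exp δ * Gop δ (uUpper w δ n) x) 1 := rfl

lemma isFront_uLower (hδ : 0 < δ) {v : ℝ → ℝ} (hv : IsFront 1 v) (n : ℕ) :
    IsFront 1 (uLower v δ n) := by
  induction n with
  | zero => exact hv
  | succ n ih =>
    have h := ((ih.cop (Real.exp_pos (-δ)).le).gop hδ).const_mul (Real.exp_pos δ).le
    rwa [← Real.exp_add, add_neg_cancel, Real.exp_zero] at h

lemma isFront_uUpper (hδ : 0 < δ) {w : ℝ → ℝ} (hw : IsFront 1 w) (n : ℕ) :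
    IsFront 1 (uUpper w δ n) := by
  induction n with
  | zero => exact hw
  | succ n ih => exact ((ih.gop hδ).const_mul (Real.exp_pos δ).le).cop zero_le_one

lemma uLower_le_uUpper (hδ : 0 < δ) {v : ℝ → ℝ} (hv : IsFront 1 v) (n : ℕ) :
    uLower v δ n ≤ uUpper v δ n := by
  induction n with
  | zero => exact le_rfl
  | succ n ih =>
    intro x
    have hcut : IsFront 1 (Cop (Real.exp (-δ)) (uLower v δ n)) :=
      (isFront_uLower hδ hv n).cop (Real.exp_pos (-δ)).le |>.mono
        (Real.exp_le_one_iff.mpr (neg_nonpos.mpr hδ.le))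
    refine le_min ?_ ((isFront_uLower hδ hv (n + 1)).le x)
    exact mul_le_mul_of_nonneg_left (Gop_mono hδ hcut.memLp_top
      (isFront_uUpper hδ hv n).memLp_top (fun y => (min_le_left _ _).trans (ih y)) x)
      (Real.exp_pos δ).le

-- Where `uLower` is cut at `e^{-δ}`, `e^δ` times the cut value is `1 ≥ uUpper`.
lemma uUpper_le_exp_mul_uLower (hδ : 0 < δ) {v : ℝ → ℝ} (hv : IsFront 1 v) (n : ℕ) (x : ℝ) :
    uUpper v δ n x ≤ Real.exp δ * uLower v δ n x := by
  induction n generalizing x with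
  | zero => exact le_mul_of_one_le_left (hv.nonneg x) (Real.one_le_exp hδ.le)
  | succ n ih =>
    have hcut := (isFront_uLower hδ hv n).cop (Real.exp_pos (-δ)).le
    have hle : uUpper v δ n ≤ fun y => Real.exp δ * Cop (Real.exp (-δ)) (uLower v δ n) y := by
      intro y
      show _ ≤ Real.exp δ * min _ _
      rw [mul_min_of_nonneg _ _ (Real.exp_pos δ).le, ← Real.exp_add, add_neg_cancel,
        Real.exp_zero]
      exact le_min (ih y) ((isFront_uUpper hδ hv n).le y)
    calc uUpper v δ (n + 1) x ≤ Real.exp δ * Gop δ (uUpper v δ n) x := min_le_left _ _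
      _ ≤ Real.exp δ * (Real.exp δ * Gop δ (Cop (Real.exp (-δ)) (uLower v δ n)) x) := by
        rw [← Gop_const_mul (Real.exp δ) (Cop _ _)]
        exact mul_le_mul_of_nonneg_left (Gop_mono hδ (isFront_uUpper hδ hv n).memLp_top
          (hcut.const_mul (Real.exp_pos δ).le).memLp_top hle x) (Real.exp_pos δ).le

lemma uUpper_mono (hδ : 0 < δ) {w₁ w₂ : ℝ → ℝ} (hw₁ : IsFront 1 w₁) (hw₂ : IsFront 1 w₂)
    (h : w₁ ≤ w₂) (n : ℕ) : uUpper w₁ δ n ≤ uUpper w₂ δ n := by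
  induction n with
  | zero => exact h
  | succ n ih =>
    intro x
    exact min_le_min_right 1 (mul_le_mul_of_nonneg_left (Gop_mono hδ
      (isFront_uUpper hδ hw₁ n).memLp_top (isFront_uUpper hδ hw₂ n).memLp_top ih x)
      (Real.exp_pos δ).le)

lemma uUpper_le_add (hδ : 0 < δ) {w₁ w₂ : ℝ → ℝ} (hw₁ : IsFront 1 w₁) (hw₂ : IsFront 1 w₂)
    {ε : ℝ} (hε : 0 ≤ ε) (h : ∀ x, w₂ x ≤ w₁ x + ε) (n : ℕ) (x : ℝ) :
    uUpper w₂ δ n x ≤ uUpper w₁ δ n x + Real.exp δ ^ n * ε := by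
  induction n generalizing x with
  | zero => simpa [uUpper] using h x
  | succ n ih =>
    have hG : Gop δ (uUpper w₂ δ n) x ≤ Gop δ (uUpper w₁ δ n) x + Real.exp δ ^ n * ε := by
      rw [← Gop_add_const hδ (isFront_uUpper hδ hw₁ n).memLp_top]
      exact Gop_mono hδ (isFront_uUpper hδ hw₂ n).memLp_top
        ((isFront_uUpper hδ hw₁ n).memLp_top.add (memLp_top_const _)) ih x
    have hε' : 0 ≤ Real.exp δ ^ (n + 1) * ε := by positivity
    calc uUpper w₂ δ (n + 1) x
        ≤ min (Real.exp δ * Gop δ (uUpper w₁ δ n) x + Real.exp δ ^ (n + 1) * ε)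
            (1 + Real.exp δ ^ (n + 1) * ε) := by
          refine min_le_min ?_ (by linarith)
          calc Real.exp δ * Gop δ (uUpper w₂ δ n) x
              ≤ Real.exp δ * (Gop δ (uUpper w₁ δ n) x + Real.exp δ ^ n * ε) :=
                mul_le_mul_of_nonneg_left hG (Real.exp_pos δ).le
            _ = _ := by ring
      _ = uUpper w₁ δ (n + 1) x + Real.exp δ ^ (n + 1) * ε := min_add_add_right _ _ _

lemma uUpper_comp_sub (w : ℝ → ℝ) (s : ℝ) (n : ℕ) (x : ℝ) :
    uUpper (fun y => w (y - s)) δ n x = uUpper w δ n (x - s) := by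
  induction n generalizing x with
  | zero => rfl
  | succ n ih => simp only [uUpper_succ, funext ih, Gop_comp_sub]

lemma intervalIntegral_uUpper_sub_uLower_le (hδ : 0 < δ) {v : ℝ → ℝ} (hv : IsFront 1 v)
    (n : ℕ) {a b : ℝ} (hab : a ≤ b) :
    ∫ x in a..b, (uUpper v δ n x - uLower v δ n x) ≤ (b - a) * (Real.exp δ - 1) := by
  have ha := isFront_uLower hδ hv n
  refine intervalIntegral_le_sub_mul hab ((isFront_uUpper hδ hv n).antitone.intervalIntegrable.sub
    ha.antitone.intervalIntegrable) fun x => ?_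
  nlinarith [uUpper_le_exp_mul_uLower hδ hv n x, ha.le x, Real.one_le_exp hδ.le]

lemma intervalIntegral_uUpper_sub_uUpper_le_of_le_comp_sub (hδ : 0 < δ) {w₁ w₂ : ℝ → ℝ}
    (hw₁ : IsFront 1 w₁) (hw₂ : IsFront 1 w₂) {s : ℝ} (hs : 0 ≤ s) (h : ∀ x, w₂ x ≤ w₁ (x - s))
    (n : ℕ) {a b : ℝ} (hab : a ≤ b) : ∫ x in a..b, (uUpper w₂ δ n x - uUpper w₁ δ n x) ≤ s := by
  have hb := isFront_uUpper hδ hw₁ n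
  have hle : ∀ x, uUpper w₂ δ n x ≤ uUpper w₁ δ n (x - s) := fun x =>
    (uUpper_mono hδ hw₂ (hw₁.comp_sub s) h n x).trans_eq (uUpper_comp_sub w₁ s n x)
  calc ∫ x in a..b, (uUpper w₂ δ n x - uUpper w₁ δ n x)
      ≤ ∫ x in a..b, (uUpper w₁ δ n (x - s) - uUpper w₁ δ n x) := by
        refine intervalIntegral.integral_mono_on hab
          ((isFront_uUpper hδ hw₂ n).antitone.intervalIntegrable.sub hb.antitone.intervalIntegrable)
          ((hb.comp_sub s).antitone.intervalIntegrable.sub hb.antitone.intervalIntegrable)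
          fun x _ => sub_le_sub_right (hle x) _
    _ ≤ s := by simpa using hb.intervalIntegral_comp_sub_sub_le hs a b

lemma intervalIntegral_uUpper_sub_uUpper_le_of_le_add (hδ : 0 < δ) {w₁ w₂ : ℝ → ℝ}
    (hw₁ : IsFront 1 w₁) (hw₂ : IsFront 1 w₂) {ε : ℝ} (hε : 0 ≤ ε) (h : ∀ x, w₂ x ≤ w₁ x + ε)
    (n : ℕ) {a b : ℝ} (hab : a ≤ b) :
    ∫ x in a..b, (uUpper w₂ δ n x - uUpper w₁ δ n x) ≤ (b - a) * (Real.exp δ ^ n * ε) :=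
  intervalIntegral_le_sub_mul hab ((isFront_uUpper hδ hw₂ n).antitone.intervalIntegrable.sub
    (isFront_uUpper hδ hw₁ n).antitone.intervalIntegrable) fun x => by
      linarith [uUpper_le_add hδ hw₁ hw₂ hε h n x]

end Iterates

lemma IsFront.ite_one {f : ℝ → ℝ} (hf : IsFront 1 f) {P : ℝ → Prop} [DecidablePred P]
    (hP : ∀ ⦃x y⦄, x ≤ y → P y → P x) : IsFront 1 (fun x => if P x then 1 else f x) := by
  refine ⟨fun x y hxy => ?_, fun x => ?_, fun x => ?_⟩
  · by_cases hy : P y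
    · simp [hy, hP hxy hy]
    · by_cases hx : P x <;> simp only [hx, hy, if_true, if_false]
      exacts [hf.le y, hf.antitone hxy]
  all_goals split_ifs
  exacts [zero_le_one, hf.nonneg x, le_rfl, hf.le x]

open Classical in
/-- The datum `v^{δ,+}`; the two branches are the cases `μ₀ ∈ ℝ` and `μ₀ = -∞`. -/
noncomputable def vPlus (v : ℝ → ℝ) (δ x : ℝ) : ℝ :=
  if BddBelow {y | v y < 1} then if x < sInf {y | v y < 1} + δ then 1 else v x
  else if 1 - δ < v x then 1 else v x

section vPlus

variable {v : ℝ → ℝ} {δ : ℝ}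

lemma vPlus_of_bddBelow (hB : BddBelow {y | v y < 1}) :
    vPlus v δ = fun x => if x < sInf {y | v y < 1} + δ then 1 else v x := by
  ext x
  simp only [vPlus, if_pos hB]

lemma vPlus_of_not_bddBelow (hB : ¬BddBelow {y | v y < 1}) :
    vPlus v δ = fun x => if 1 - δ < v x then 1 else v x := by
  ext x
  simp only [vPlus, if_neg hB]

lemma IsFront.vPlus (hv : IsFront 1 v) : IsFront 1 (vPlus v δ) := by
  by_cases hB : BddBelow {y | v y < 1}
  · rw [vPlus_of_bddBelow hB]
    exact hv.ite_one fun x y hxy hy => hxy.trans_lt hy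
  · rw [vPlus_of_not_bddBelow hB]
    exact hv.ite_one fun x y hxy hy => hy.trans_le (hv.antitone hxy)

lemma le_vPlus (hv : IsFront 1 v) : v ≤ vPlus v δ := by
  intro x
  unfold vPlus
  split_ifs <;> first | exact hv.le x | exact le_rfl

lemma vPlus_le_comp_sub (hδ : 0 ≤ δ) (hv : IsFront 1 v) (hB : BddBelow {y | v y < 1}) (x : ℝ) :
    vPlus v δ x ≤ v (x - δ) := by
  simp only [vPlus_of_bddBelow hB]
  split_ifs with hx
  · exact not_lt.mp fun h => (csInf_le hB h).not_gt (by linarith)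
  · exact hv.antitone (by linarith)

lemma vPlus_le_add (hδ : 0 ≤ δ) (hB : ¬BddBelow {y | v y < 1}) (x : ℝ) :
    vPlus v δ x ≤ v x + δ := by
  simp only [vPlus_of_not_bddBelow hB]
  split_ifs <;> linarith

lemma intervalIntegral_uUpper_vPlus_sub_uUpper_le (hδ : 0 < δ) (hv : IsFront 1 v) (n : ℕ)
    {A : ℝ} (hA : 1 / 2 ≤ A) :
    ∫ x in (-A)..A, (uUpper (vPlus v δ) δ n x - uUpper v δ n x)
      ≤ 2 * A * (Real.exp δ ^ n * (Real.exp δ - 1)) := by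
  have hδE : δ ≤ Real.exp δ - 1 := by linarith [Real.add_one_le_exp δ]
  have hEn : 1 ≤ Real.exp δ ^ n := one_le_pow₀ (Real.one_le_exp hδ.le)
  have h2AEn : 1 ≤ 2 * A * Real.exp δ ^ n := by nlinarith
  by_cases hB : BddBelow {y | v y < 1}
  · calc _ ≤ δ := intervalIntegral_uUpper_sub_uUpper_le_of_le_comp_sub hδ hv hv.vPlus hδ.le
          (vPlus_le_comp_sub hδ.le hv hB) n (by linarith)
      _ ≤ _ := by nlinarith [mul_le_mul_of_nonneg_right h2AEn (hδ.le.trans hδE)]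
  · calc _ ≤ (A - -A) * (Real.exp δ ^ n * δ) :=
          intervalIntegral_uUpper_sub_uUpper_le_of_le_add hδ hv hv.vPlus hδ.le
            (vPlus_le_add hδ.le hB) n (by linarith)
      _ ≤ _ := by rw [sub_neg_eq_add, ← two_mul]; gcongr

end vPlus

theorem statement_17_general (v : ℝ → ℝ)
    (hv01 : ∀ x, v x ∈ Set.Icc (0 : ℝ) 1)
    (hvmono : Antitone v)
    (δ : ℝ) (hδ : 0 < δ)
    (vplus : ℝ → ℝ)
    -- case μ₀ ∈ ℝ :
    (hvplus_fin : BddBelow {x : ℝ | v x < 1} →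
      ∀ x, vplus x = if x < sInf {x : ℝ | v x < 1} + δ then 1 else v x)
    -- case μ₀ = -∞ :
    (hvplus_inf : ¬ BddBelow {x : ℝ | v x < 1} →
      ∀ x, vplus x = if 1 - δ < v x then 1 else v x)
    (n : ℕ) (A : ℝ) (hA : 1 / 2 ≤ A) :
    ∫ x in Set.Icc (-A) A, |uUpper vplus δ n x - uLower v δ n x|
      ≤ 4 * A * (1 + Real.exp (δ * n)) * (Real.exp δ - 1) := by
  have hv : IsFront 1 v := ⟨hvmono, fun x => (hv01 x).1, fun x => (hv01 x).2⟩
  obtain rfl : vplus = vPlus v δ := by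
    by_cases hB : BddBelow {x : ℝ | v x < 1}
    · rw [vPlus_of_bddBelow hB]; exact funext (hvplus_fin hB)
    · rw [vPlus_of_not_bddBelow hB]; exact funext (hvplus_inf hB)
  have hA' : -A ≤ A := by linarith
  have hcb := uUpper_mono hδ hv hv.vPlus (le_vPlus (δ := δ) hv) n
  have hba := uLower_le_uUpper hδ hv n
  have hc : IntervalIntegrable (uUpper (vPlus v δ) δ n) volume (-A) A :=
    (isFront_uUpper hδ hv.vPlus n).antitone.intervalIntegrable
  have hb : IntervalIntegrable (uUpper v δ n) volume (-A) A :=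
    (isFront_uUpper hδ hv n).antitone.intervalIntegrable
  have ha : IntervalIntegrable (uLower v δ n) volume (-A) A :=
    (isFront_uLower hδ hv n).antitone.intervalIntegrable
  rw [integral_Icc_eq_integral_Ioc, ← intervalIntegral.integral_of_le hA']
  calc ∫ x in (-A)..A, |uUpper (vPlus v δ) δ n x - uLower v δ n x|
      = (∫ x in (-A)..A, (uUpper (vPlus v δ) δ n x - uUpper v δ n x))
          + ∫ x in (-A)..A, (uUpper v δ n x - uLower v δ n x) := by
        rw [← intervalIntegral.integral_add (hc.sub hb) (hb.sub ha)]
        refine intervalIntegral.integral_congr fun x _ => ?_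
        rw [abs_of_nonneg (by linarith [hcb x, hba x])]
        ring
    _ ≤ 2 * A * (Real.exp δ ^ n * (Real.exp δ - 1)) + (A - -A) * (Real.exp δ - 1) :=
        add_le_add (intervalIntegral_uUpper_vPlus_sub_uUpper_le hδ hv n hA)
          (intervalIntegral_uUpper_sub_uLower_le hδ hv n hA')
    _ ≤ 4 * A * (1 + Real.exp (δ * n)) * (Real.exp δ - 1) := by
        rw [mul_comm δ, Real.exp_nat_mul]
        have hE : 0 ≤ Real.exp δ - 1 := by linarith [Real.one_le_exp hδ.le]
        nlinarith [mul_nonneg (mul_nonneg (by linarith : 0 ≤ A)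
          (add_nonneg zero_le_one (pow_nonneg (Real.exp_pos δ).le n))) hE]

theorem statement_17 (v : ℝ → ℝ)
    (hv01 : ∀ x, v x ∈ Set.Icc (0 : ℝ) 1)
    (hvmono : Antitone v)
    (hvtop : Tendsto v atTop (𝓝 0))
    (hvbot : Tendsto v atBot (𝓝 1))
    (δ : ℝ) (hδ : 0 < δ)
    (vplus : ℝ → ℝ)
    -- case μ₀ ∈ ℝ :
    (hvplus_fin : BddBelow {x : ℝ | v x < 1} →
      ∀ x, vplus x = if x < sInf {x : ℝ | v x < 1} + δ then 1 else v x)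
    -- case μ₀ = -∞ :
    (hvplus_inf : ¬ BddBelow {x : ℝ | v x < 1} →
      ∀ x, vplus x = if 1 - δ < v x then 1 else v x)
    (n : ℕ) (A : ℝ) (hA : 1 / 2 ≤ A) :
    ∫ x in Set.Icc (-A) A, |uUpper vplus δ n x - uLower v δ n x|
      ≤ 4 * A * (1 + Real.exp (δ * n)) * (Real.exp δ - 1) :=
  statement_17_general v hv01 hvmono δ hδ vplus hvplus_fin hvplus_inf n A hA
end

section
/- Suppose v⁺ : ℝ → [0,1] is non-increasing, v⁺(x) → 0 as x → ∞, and v⁺(x) = 1 for some x ∈ ℝ. For t ≥ 0 let u⁺(·,t) := e^t G_t v⁺ (with u⁺(·,0) = v⁺), and let μ⁺_t := inf{x ∈ ℝ : u⁺(x,t) < 1}. Then μ⁺_t ∈ ℝ for every t ≥ 0, and the map t ↦ μ⁺_t is continuous on [0,∞). -/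
open MeasureTheory Filter Set
open scoped Topology

/-- `u⁺(x,t) = e^t (G_t v⁺)(x)` for `t > 0`, with `u⁺(·,0) = v⁺`. -/
noncomputable def uPlusHeat (vplus : ℝ → ℝ) (x t : ℝ) : ℝ :=
  if t = 0 then vplus x else Real.exp t * ∫ y, heatKernel t (x - y) * vplus y

/-!
For `t > 0` the change of variables `y = x + √(2t) z` turns `u⁺(x,t)` into `e^t 𝔼[v⁺(x + √(2t) Z)]`
with `Z` standard normal. This is antitone in `x`, tends to `0` as `x → ∞` and to `e^t > 1` as
`x → -∞`, so `{x | u⁺(x,t) < 1}` is a nonempty half-line bounded below. Let `m₀ = μ⁺_0`, so that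
`v⁺ = 1` left of `m₀` and `v⁺ < 1` right of it. For `t > 0` the function `u⁺(·,t)` is then strictly
decreasing, and `u⁺(x,·)` is continuous (dominated convergence, `v⁺` being continuous off a
countable set); these two facts give continuity of `μ⁺` at positive times. At `t = 0` the Chernoff
bound `P(Z ≥ a) ≤ e^{-a²/2}` gives `u⁺(y,t) ≥ e^t (1 - e^{-(m₀-y)²/(4t)}) ≥ 1` for `y < m₀` and
small `t`, because the Gaussian tail is `o(t)`, and `u⁺(y,t) ≤ e^t (v⁺(x') + e^{-(y-x')²/(4t)})`,
which tends to `v⁺(x') < 1`, for `m₀ < x' < y`.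
-/

open ProbabilityTheory Real
open scoped NNReal

noncomputable def gaussAvg (v : ℝ → ℝ) (x s : ℝ) : ℝ := ∫ z, v (x + s * z) ∂gaussianReal 0 1

lemma gaussianReal_map_affine (x s : ℝ) :
    (gaussianReal 0 1).map (fun z => x + s * z) = gaussianReal x (s ^ 2).toNNReal := by
  have : (fun z => x + s * z) = (x + ·) ∘ (s * ·) := rfl
  rw [this, ← Measure.map_map (measurable_const_add x) (measurable_const_mul s),
    gaussianReal_map_const_mul, gaussianReal_map_const_add, mul_zero, zero_add, mul_one]
  congr 1
  ext
  simp [sq_nonneg]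

lemma integral_gaussianReal_eq_gaussAvg {v : ℝ → ℝ} (hv : Measurable v) (x s : ℝ) :
    ∫ y, v y ∂gaussianReal x (s ^ 2).toNNReal = gaussAvg v x s := by
  rw [← gaussianReal_map_affine, integral_map (by fun_prop) hv.aestronglyMeasurable]
  rfl

lemma heatKernel_sub_eq_gaussianPDFReal {t : ℝ} (ht : 0 ≤ t) (x y : ℝ) :
    heatKernel t (x - y) = gaussianPDFReal x (2 * t).toNNReal y := by
  rw [heatKernel, gaussianPDFReal_def, Real.coe_toNNReal _ (by positivity), div_eq_inv_mul]
  congr 2 <;> ring_nf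

lemma uPlusHeat_zero (v : ℝ → ℝ) (x : ℝ) : uPlusHeat v x 0 = v x := if_pos rfl

lemma uPlusHeat_of_pos {v : ℝ → ℝ} (hv : Measurable v) {t : ℝ} (ht : 0 < t) (x : ℝ) :
    uPlusHeat v x t = exp t * gaussAvg v x √(2 * t) := by
  rw [uPlusHeat, if_neg ht.ne', ← integral_gaussianReal_eq_gaussAvg hv, sq_sqrt (by positivity),
    integral_gaussianReal_eq_integral_smul (by simpa using ht)]
  simp only [heatKernel_sub_eq_gaussianPDFReal ht.le, smul_eq_mul]

lemma gaussianReal_real_Ici_le {a : ℝ} (ha : 0 ≤ a) :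
    (gaussianReal 0 1).real (Ici a) ≤ exp (-(a ^ 2 / 2)) := by
  have h := measure_ge_le_exp_mul_mgf (X := id) (μ := gaussianReal 0 1) a ha
    (integrable_exp_mul_gaussianReal a)
  rw [mgf_id_gaussianReal, ← exp_add] at h
  convert h using 2
  · rfl
  · rw [NNReal.coe_one]; ring

lemma gaussianReal_real_Iic_neg_le {a : ℝ} (ha : 0 ≤ a) :
    (gaussianReal 0 1).real (Iic (-a)) ≤ exp (-(a ^ 2 / 2)) := by
  have h := measure_le_le_exp_mul_mgf (X := id) (μ := gaussianReal 0 1) (-a) (neg_nonpos.2 ha)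
    (integrable_exp_mul_gaussianReal (-a))
  rw [mgf_id_gaussianReal, ← exp_add] at h
  convert h using 2
  · rfl
  · rw [NNReal.coe_one]; ring

section gaussAvg

variable {v : ℝ → ℝ}

lemma norm_le_one_of_mem_Icc {a : ℝ} (ha : a ∈ Icc (0 : ℝ) 1) : ‖a‖ ≤ 1 :=
  abs_le.2 ⟨by linarith [ha.1], ha.2⟩

lemma integrable_comp_const_add_mul (hv : Measurable v) (hv01 : ∀ y, v y ∈ Icc (0 : ℝ) 1)
    (x s : ℝ) : Integrable (fun z => v (x + s * z)) (gaussianReal 0 1) :=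
  .of_bound (hv.comp (by fun_prop)).aestronglyMeasurable 1
    (ae_of_all _ fun _ => norm_le_one_of_mem_Icc (hv01 _))

lemma antitone_gaussAvg (hv : Antitone v) (hv01 : ∀ y, v y ∈ Icc (0 : ℝ) 1) (s : ℝ) :
    Antitone (gaussAvg v · s) := fun _ _ hx =>
  integral_mono (integrable_comp_const_add_mul hv.measurable hv01 _ _)
    (integrable_comp_const_add_mul hv.measurable hv01 _ _) fun _ => hv (by gcongr)

lemma strictAnti_gaussAvg (hv : Antitone v) (hv01 : ∀ y, v y ∈ Icc (0 : ℝ) 1) {m : ℝ}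
    (h1 : ∀ y < m, v y = 1) (h2 : ∀ y, m < y → v y < 1) {s : ℝ} (hs : 0 < s) :
    StrictAnti (gaussAvg v · s) := by
  intro x₁ x₂ hx
  have hint := integrable_comp_const_add_mul hv.measurable hv01
  have hsupp : Ioo ((m - x₂) / s) ((m - x₁) / s) ⊆
      Function.support (fun z => v (x₁ + s * z) - v (x₂ + s * z)) := by
    intro z ⟨hz₂, hz₁⟩
    rw [div_lt_iff₀ hs] at hz₂
    rw [lt_div_iff₀ hs] at hz₁
    rw [Function.mem_support, h1 _ (by linarith)]
    exact (sub_pos.2 (h2 _ (by linarith))).ne'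
  have hpos : 0 < ∫ z, (v (x₁ + s * z) - v (x₂ + s * z)) ∂gaussianReal 0 1 := by
    rw [integral_pos_iff_support_of_nonneg (fun z => sub_nonneg.2 (hv (by gcongr)))
      ((hint _ _).sub (hint _ _))]
    refine (pos_iff_ne_zero.2 fun h => ?_).trans_le (measure_mono hsupp)
    have := gaussianReal_absolutelyContinuous' 0 one_ne_zero h
    rw [Real.volume_Ioo, ENNReal.ofReal_eq_zero, sub_nonpos, div_le_div_iff_of_pos_right hs] at this
    linarith
  rw [integral_sub (hint _ _) (hint _ _)] at hpos
  exact sub_pos.1 hpos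

lemma continuousAt_gaussAvg (hv : Antitone v) (hv01 : ∀ y, v y ∈ Icc (0 : ℝ) 1) (x : ℝ)
    {s₀ : ℝ} (hs₀ : s₀ ≠ 0) : ContinuousAt (gaussAvg v x) s₀ := by
  refine tendsto_integral_filter_of_dominated_convergence (fun _ => 1)
    (.of_forall fun s => (integrable_comp_const_add_mul hv.measurable hv01 x s).1)
    (.of_forall fun _ => ae_of_all _ fun _ => norm_le_one_of_mem_Icc (hv01 _))
    (integrable_const 1) ?_
  have hinj : Function.Injective (fun z => x + s₀ * z) := fun a b hab =>
    mul_left_cancel₀ hs₀ (add_left_cancel hab)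
  have hnull := (hv.countable_not_continuousAt.preimage hinj).measure_zero volume
  filter_upwards [measure_eq_zero_iff_ae_notMem.1
    (gaussianReal_absolutelyContinuous 0 one_ne_zero hnull)] with z hz
  exact (not_not.1 hz).tendsto.comp (by fun_prop : Continuous fun s => x + s * z).continuousAt

lemma tendsto_gaussAvg (hv : Measurable v) (hv01 : ∀ y, v y ∈ Icc (0 : ℝ) 1) {l : Filter ℝ}
    [l.IsCountablyGenerated] (hl : ∀ c, Tendsto (· + c) l l) {L : ℝ} (hvL : Tendsto v l (𝓝 L))
    (s : ℝ) : Tendsto (gaussAvg v · s) l (𝓝 L) := by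
  have h := tendsto_integral_filter_of_dominated_convergence (μ := gaussianReal 0 1)
    (F := fun x z => v (x + s * z)) (fun _ => 1)
    (.of_forall fun x => (integrable_comp_const_add_mul hv hv01 x s).1)
    (.of_forall fun _ => ae_of_all _ fun _ => norm_le_one_of_mem_Icc (hv01 _))
    (integrable_const 1) (ae_of_all _ fun z => hvL.comp (hl (s * z)))
  simpa [gaussAvg] using h

lemma one_sub_exp_le_gaussAvg (hv : Measurable v) (hv01 : ∀ y, v y ∈ Icc (0 : ℝ) 1) {m : ℝ}
    (h1 : ∀ y < m, v y = 1) {x s : ℝ} (hs : 0 < s) (hx : x ≤ m) :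
    1 - exp (-(((m - x) / s) ^ 2 / 2)) ≤ gaussAvg v x s := by
  set a := (m - x) / s
  have hle : ∀ z, 1 - (Ici a).indicator 1 z ≤ v (x + s * z) := by
    intro z
    rcases le_or_gt a z with hz | hz
    · simp [indicator_of_mem (mem_Ici.2 hz), (hv01 _).1]
    · rw [indicator_of_notMem (notMem_Ici.2 hz), sub_zero, h1]
      have := (lt_div_iff₀' hs).1 hz
      linarith
  calc 1 - exp (-(a ^ 2 / 2))
      ≤ 1 - (gaussianReal 0 1).real (Ici a) := by
        linarith [gaussianReal_real_Ici_le (div_nonneg (sub_nonneg.2 hx) hs.le)]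
    _ = ∫ z, (1 - (Ici a).indicator 1 z) ∂gaussianReal 0 1 := by
        rw [integral_sub (integrable_const 1) ((integrable_const 1).indicator measurableSet_Ici),
          integral_indicator_one measurableSet_Ici]
        simp
    _ ≤ gaussAvg v x s :=
        integral_mono ((integrable_const 1).sub ((integrable_const 1).indicator measurableSet_Ici))
          (integrable_comp_const_add_mul hv hv01 x s) hle

lemma gaussAvg_le_add_exp (hv : Antitone v) (hv01 : ∀ y, v y ∈ Icc (0 : ℝ) 1) {x x' s : ℝ}
    (hs : 0 < s) (hx : x' ≤ x) :
    gaussAvg v x s ≤ v x' + exp (-(((x - x') / s) ^ 2 / 2)) := by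
  set a := (x - x') / s
  have hle : ∀ z, v (x + s * z) ≤ v x' + (Iic (-a)).indicator 1 z := by
    intro z
    rcases le_or_gt z (-a) with hz | hz
    · simp only [indicator_of_mem (mem_Iic.2 hz), Pi.one_apply]
      linarith [(hv01 x').1, (hv01 (x + s * z)).2]
    · rw [indicator_of_notMem (notMem_Iic.2 hz), add_zero]
      have := (lt_div_iff₀ hs).1 (neg_lt.1 hz)
      exact hv (by linarith)
  calc gaussAvg v x s
      ≤ ∫ z, (v x' + (Iic (-a)).indicator 1 z) ∂gaussianReal 0 1 :=
        integral_mono (integrable_comp_const_add_mul hv.measurable hv01 x s)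
          ((integrable_const _).add ((integrable_const 1).indicator measurableSet_Iic)) hle
    _ = v x' + (gaussianReal 0 1).real (Iic (-a)) := by
        rw [integral_add (integrable_const _) ((integrable_const 1).indicator measurableSet_Iic),
          integral_indicator_one measurableSet_Iic]
        simp
    _ ≤ v x' + exp (-(a ^ 2 / 2)) := by
        gcongr
        exact gaussianReal_real_Iic_neg_le (div_nonneg (sub_nonneg.2 hx) hs.le)

end gaussAvg

section LevelSet

variable {f : ℝ → ℝ} {c y : ℝ}

lemma mem_lowerBounds_setOf_lt (hf : Antitone f) (hy : c ≤ f y) :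
    y ∈ lowerBounds {x | f x < c} := fun _ hx =>
  le_of_not_gt fun hxy => (hf hxy.le).not_gt (hx.trans_le hy)

lemma le_of_lt_csInf_setOf_lt (hbdd : BddBelow {x | f x < c}) (hy : y < sInf {x | f x < c}) :
    c ≤ f y :=
  not_lt.1 fun h => notMem_of_lt_csInf hy hbdd h

lemma lt_of_csInf_setOf_lt_lt (hf : Antitone f) (hne : {x | f x < c}.Nonempty)
    (hy : sInf {x | f x < c} < y) : f y < c := by
  obtain ⟨x, hx, hxy⟩ := exists_lt_of_csInf_lt hne hy
  exact (hf hxy.le).trans_lt hx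

lemma lt_of_lt_csInf_setOf_lt (hf : StrictAnti f) (hbdd : BddBelow {x | f x < c})
    (hy : y < sInf {x | f x < c}) : c < f y :=
  (le_of_lt_csInf_setOf_lt hbdd (add_div_two_lt_right.2 hy)).trans_lt
    (hf (left_lt_add_div_two.2 hy))

end LevelSet

lemma tendsto_csInf_of_eventually {α : Type*} {l : Filter α} {S : α → Set ℝ} {m : ℝ}
    (hlow : ∀ y < m, ∀ᶠ t in l, y ∈ lowerBounds (S t))
    (hmem : ∀ y, m < y → ∀ᶠ t in l, y ∈ S t) :
    Tendsto (fun t => sInf (S t)) l (𝓝 m) := by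
  refine tendsto_order.2 ⟨fun a ha => ?_, fun b hb => ?_⟩
  · filter_upwards [hlow ((a + m) / 2) (by linarith), hmem (m + 1) (by linarith)]
      with t hlb hne
    exact (left_lt_add_div_two.2 ha).trans_le (le_csInf ⟨_, hne⟩ hlb)
  · filter_upwards [hlow (m - 1) (by linarith), hmem ((m + b) / 2) (by linarith)]
      with t hlb hmb
    exact (csInf_le ⟨_, hlb⟩ hmb).trans_lt (add_div_two_lt_right.2 hb)

lemma tendsto_exp_neg_div_div_nhdsGT {c : ℝ} (hc : 0 < c) :
    Tendsto (fun t => exp (-(c / t)) / t) (𝓝[>] 0) (𝓝 0) := by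
  have h := ((tendsto_pow_mul_exp_neg_atTop_nhds_zero 1).comp
    (tendsto_inv_nhdsGT_zero.const_mul_atTop hc)).const_mul c⁻¹
  rw [mul_zero] at h
  refine h.congr' (eventually_mem_nhdsWithin.mono fun t (ht : 0 < t) => ?_)
  simp only [Function.comp_apply, pow_one]
  field_simp

lemma tendsto_exp_neg_div_nhdsGT {c : ℝ} (hc : 0 < c) :
    Tendsto (fun t => exp (-(c / t))) (𝓝[>] 0) (𝓝 0) := by
  have h := (tendsto_exp_neg_div_div_nhdsGT hc).mul (tendsto_nhdsWithin_of_tendsto_nhds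
    (tendsto_id (x := 𝓝 (0 : ℝ))))
  rw [zero_mul] at h
  exact h.congr' (eventually_mem_nhdsWithin.mono fun t (ht : 0 < t) => div_mul_cancel₀ _ ht.ne')

lemma eventually_one_le_exp_mul_one_sub_exp {c : ℝ} (hc : 0 < c) :
    ∀ᶠ t in 𝓝[>] 0, 1 ≤ exp t * (1 - exp (-(c / t))) := by
  filter_upwards [eventually_mem_nhdsWithin,
    (tendsto_exp_neg_div_div_nhdsGT hc).eventually_lt_const one_half_pos,
    eventually_nhdsWithin_of_eventually_nhds (eventually_lt_nhds one_pos)]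
    with t (ht : 0 < t) hsmall ht1
  -- `exp t ≥ 1 + t` and `exp (-c/t) < t/2`, while `(1 + t) (1 - t/2) ≥ 1` for `t ≤ 1`
  have hε : exp (-(c / t)) < t / 2 := by
    rw [div_lt_iff₀ ht] at hsmall; linarith
  nlinarith [add_one_le_exp t]

lemma sq_div_sqrt_two_mul_div_two {t : ℝ} (ht : 0 < t) (d : ℝ) :
    (d / √(2 * t)) ^ 2 / 2 = d ^ 2 / 4 / t := by
  rw [div_pow, sq_sqrt (by positivity)]
  field_simp
  ring

section Heat

variable {v : ℝ → ℝ}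

lemma antitone_uPlusHeat (hv01 : ∀ x, v x ∈ Icc (0 : ℝ) 1) (hvmono : Antitone v) {t : ℝ}
    (ht : 0 ≤ t) : Antitone (uPlusHeat v · t) := by
  rcases ht.eq_or_lt with rfl | ht
  · simpa only [uPlusHeat_zero] using hvmono
  · simp only [uPlusHeat_of_pos hvmono.measurable ht]
    exact (antitone_gaussAvg hvmono hv01 _).const_mul (exp_pos t).le

lemma strictAnti_uPlusHeat (hv01 : ∀ x, v x ∈ Icc (0 : ℝ) 1) (hvmono : Antitone v) {m : ℝ}
    (h1 : ∀ y < m, v y = 1) (h2 : ∀ y, m < y → v y < 1) {t : ℝ} (ht : 0 < t) :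
    StrictAnti (uPlusHeat v · t) := by
  simp only [uPlusHeat_of_pos hvmono.measurable ht]
  exact (strictAnti_gaussAvg hvmono hv01 h1 h2 (sqrt_pos.2 (by positivity))).const_mul
    (exp_pos t)

lemma continuousAt_uPlusHeat (hv01 : ∀ x, v x ∈ Icc (0 : ℝ) 1) (hvmono : Antitone v) (x : ℝ)
    {t₀ : ℝ} (ht₀ : 0 < t₀) : ContinuousAt (uPlusHeat v x) t₀ := by
  have hG : ContinuousAt (fun t => exp t * gaussAvg v x √(2 * t)) t₀ :=
    continuous_exp.continuousAt.mul ((continuousAt_gaussAvg hvmono hv01 x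
      (sqrt_pos.2 (by positivity)).ne').comp (f := fun t => √(2 * t)) (by fun_prop))
  refine hG.congr (eventually_gt_nhds ht₀ |>.mono fun t ht => ?_)
  exact (uPlusHeat_of_pos hvmono.measurable ht x).symm

lemma exists_uPlusHeat_lt_one (hv01 : ∀ x, v x ∈ Icc (0 : ℝ) 1) (hvmono : Antitone v)
    (hvtop : Tendsto v atTop (𝓝 0)) {t : ℝ} (ht : 0 ≤ t) : ∃ x, uPlusHeat v x t < 1 := by
  rcases ht.eq_or_lt with rfl | ht
  · simpa only [uPlusHeat_zero] using (hvtop.eventually_lt_const one_pos).exists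
  · have h := (tendsto_gaussAvg hvmono.measurable hv01
      (fun c => tendsto_atTop_add_const_right _ c tendsto_id) hvtop √(2 * t)).const_mul (exp t)
    rw [mul_zero] at h
    simpa only [uPlusHeat_of_pos hvmono.measurable ht] using (h.eventually_lt_const one_pos).exists

lemma exists_one_le_uPlusHeat (hv01 : ∀ x, v x ∈ Icc (0 : ℝ) 1) (hvmono : Antitone v)
    (hvone : ∃ x, v x = 1) {t : ℝ} (ht : 0 ≤ t) : ∃ x, 1 ≤ uPlusHeat v x t := by
  obtain ⟨x₀, hx₀⟩ := hvone
  rcases ht.eq_or_lt with rfl | ht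
  · exact ⟨x₀, by rw [uPlusHeat_zero, hx₀]⟩
  · have hbot : Tendsto v atBot (𝓝 1) := tendsto_const_nhds.congr'
      ((eventually_le_atBot x₀).mono fun y hy => (le_antisymm (hv01 y).2 (hx₀ ▸ hvmono hy)).symm)
    have h := (tendsto_gaussAvg hvmono.measurable hv01
      (fun c => tendsto_atBot_add_const_right _ c tendsto_id) hbot √(2 * t)).const_mul (exp t)
    rw [mul_one] at h
    obtain ⟨x, hx⟩ := (h.eventually_const_lt (one_lt_exp_iff.2 ht)).exists
    exact ⟨x, (uPlusHeat_of_pos hvmono.measurable ht x).symm ▸ hx.le⟩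

lemma nonempty_bddBelow_setOf_uPlusHeat_lt_one (hv01 : ∀ x, v x ∈ Icc (0 : ℝ) 1)
    (hvmono : Antitone v) (hvtop : Tendsto v atTop (𝓝 0)) (hvone : ∃ x, v x = 1) {t : ℝ}
    (ht : 0 ≤ t) :
    {x | uPlusHeat v x t < 1}.Nonempty ∧ BddBelow {x | uPlusHeat v x t < 1} := by
  obtain ⟨x, hx⟩ := exists_one_le_uPlusHeat hv01 hvmono hvone ht
  exact ⟨exists_uPlusHeat_lt_one hv01 hvmono hvtop ht,
    x, mem_lowerBounds_setOf_lt (antitone_uPlusHeat hv01 hvmono ht) hx⟩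

lemma eventually_one_le_uPlusHeat (hv01 : ∀ x, v x ∈ Icc (0 : ℝ) 1) (hvmono : Antitone v)
    {m : ℝ} (h1 : ∀ y < m, v y = 1) {x : ℝ} (hx : x < m) :
    ∀ᶠ t in 𝓝[>] 0, 1 ≤ uPlusHeat v x t := by
  filter_upwards [eventually_mem_nhdsWithin,
    eventually_one_le_exp_mul_one_sub_exp (by positivity : 0 < (m - x) ^ 2 / 4)]
    with t (ht : 0 < t) hlow
  have hs : 0 < √(2 * t) := sqrt_pos.2 (by positivity)
  have hG := one_sub_exp_le_gaussAvg hvmono.measurable hv01 h1 hs hx.le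
  rw [sq_div_sqrt_two_mul_div_two ht] at hG
  rw [uPlusHeat_of_pos hvmono.measurable ht]
  exact hlow.trans (by gcongr)

lemma eventually_uPlusHeat_lt_one (hv01 : ∀ x, v x ∈ Icc (0 : ℝ) 1) (hvmono : Antitone v)
    {x x' : ℝ} (hx' : x' < x) (hvx' : v x' < 1) :
    ∀ᶠ t in 𝓝[>] 0, uPlusHeat v x t < 1 := by
  have hlim : Tendsto (fun t => exp t * (v x' + exp (-((x - x') ^ 2 / 4 / t)))) (𝓝[>] 0)
      (𝓝 (exp 0 * (v x' + 0))) :=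
    (continuous_exp.tendsto 0).mono_left nhdsWithin_le_nhds |>.mul
      (tendsto_const_nhds.add (tendsto_exp_neg_div_nhdsGT (by nlinarith)))
  rw [exp_zero, one_mul, add_zero] at hlim
  filter_upwards [eventually_mem_nhdsWithin, hlim.eventually_lt_const hvx'] with t (ht : 0 < t) hup
  have hG := gaussAvg_le_add_exp hvmono hv01 (sqrt_pos.2 (by positivity : 0 < 2 * t)) hx'.le
  rw [sq_div_sqrt_two_mul_div_two ht] at hG
  rw [uPlusHeat_of_pos hvmono.measurable ht]
  exact (mul_le_mul_of_nonneg_left hG (exp_pos t).le).trans_lt hup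

lemma eq_one_of_lt_csInf_setOf_lt_one (hv01 : ∀ x, v x ∈ Icc (0 : ℝ) 1) (hvmono : Antitone v)
    (hvtop : Tendsto v atTop (𝓝 0)) (hvone : ∃ x, v x = 1) {y : ℝ}
    (hy : y < sInf {x | v x < 1}) : v y = 1 := by
  have hbdd := (nonempty_bddBelow_setOf_uPlusHeat_lt_one hv01 hvmono hvtop hvone le_rfl).2
  simp only [uPlusHeat_zero] at hbdd
  exact le_antisymm (hv01 y).2 (le_of_lt_csInf_setOf_lt hbdd hy)

lemma lt_one_of_csInf_setOf_lt_one_lt (hv01 : ∀ x, v x ∈ Icc (0 : ℝ) 1) (hvmono : Antitone v)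
    (hvtop : Tendsto v atTop (𝓝 0)) (hvone : ∃ x, v x = 1) {y : ℝ}
    (hy : sInf {x | v x < 1} < y) : v y < 1 := by
  have hne := (nonempty_bddBelow_setOf_uPlusHeat_lt_one hv01 hvmono hvtop hvone le_rfl).1
  simp only [uPlusHeat_zero] at hne
  exact lt_of_csInf_setOf_lt_lt hvmono hne hy

lemma tendsto_csInf_setOf_uPlusHeat_lt_one_nhdsGT_zero (hv01 : ∀ x, v x ∈ Icc (0 : ℝ) 1)
    (hvmono : Antitone v) (hvtop : Tendsto v atTop (𝓝 0)) (hvone : ∃ x, v x = 1) :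
    Tendsto (fun t => sInf {x | uPlusHeat v x t < 1}) (𝓝[>] 0)
      (𝓝 (sInf {x | uPlusHeat v x 0 < 1})) := by
  simp only [uPlusHeat_zero]
  refine tendsto_csInf_of_eventually (fun y hy => ?_) (fun y hy => ?_)
  · filter_upwards [eventually_mem_nhdsWithin, eventually_one_le_uPlusHeat hv01 hvmono
      (fun _ => eq_one_of_lt_csInf_setOf_lt_one hv01 hvmono hvtop hvone) hy]
      with t (ht : 0 < t) hle
    exact mem_lowerBounds_setOf_lt (antitone_uPlusHeat hv01 hvmono ht.le) hle
  · exact eventually_uPlusHeat_lt_one hv01 hvmono (add_div_two_lt_right.2 hy)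
      (lt_one_of_csInf_setOf_lt_one_lt hv01 hvmono hvtop hvone (left_lt_add_div_two.2 hy))

lemma continuousAt_csInf_setOf_uPlusHeat_lt_one (hv01 : ∀ x, v x ∈ Icc (0 : ℝ) 1)
    (hvmono : Antitone v) (hvtop : Tendsto v atTop (𝓝 0)) (hvone : ∃ x, v x = 1) {t₀ : ℝ}
    (ht₀ : 0 < t₀) : ContinuousAt (fun t => sInf {x | uPlusHeat v x t < 1}) t₀ := by
  obtain ⟨hne, hbdd⟩ := nonempty_bddBelow_setOf_uPlusHeat_lt_one hv01 hvmono hvtop hvone ht₀.le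
  refine tendsto_csInf_of_eventually (fun y hy => ?_) (fun y hy => ?_)
  · have hstrict := strictAnti_uPlusHeat hv01 hvmono
      (fun _ => eq_one_of_lt_csInf_setOf_lt_one hv01 hvmono hvtop hvone)
      (fun _ => lt_one_of_csInf_setOf_lt_one_lt hv01 hvmono hvtop hvone) ht₀
    filter_upwards [eventually_gt_nhds ht₀, (continuousAt_uPlusHeat hv01 hvmono y ht₀)
      |>.eventually_const_lt (lt_of_lt_csInf_setOf_lt hstrict hbdd hy)] with t ht hlt
    exact mem_lowerBounds_setOf_lt (antitone_uPlusHeat hv01 hvmono ht.le) hlt.le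
  · exact (continuousAt_uPlusHeat hv01 hvmono y ht₀).eventually_lt_const
      (lt_of_csInf_setOf_lt_lt (antitone_uPlusHeat hv01 hvmono ht₀.le) hne hy)

end Heat

theorem statement_18 (vplus : ℝ → ℝ)
    (hv01 : ∀ x, vplus x ∈ Set.Icc (0 : ℝ) 1)
    (hvmono : Antitone vplus)
    (hvtop : Tendsto vplus atTop (𝓝 0))
    (hvone : ∃ x, vplus x = 1) :
    (∀ t, 0 ≤ t →
      {x : ℝ | uPlusHeat vplus x t < 1}.Nonempty ∧
      BddBelow {x : ℝ | uPlusHeat vplus x t < 1}) ∧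
    ContinuousOn (fun t => sInf {x : ℝ | uPlusHeat vplus x t < 1}) (Set.Ici 0) := by
  refine ⟨fun t ht => nonempty_bddBelow_setOf_uPlusHeat_lt_one hv01 hvmono hvtop hvone ht,
    fun t₀ ht₀ => ?_⟩
  rcases (mem_Ici.1 ht₀).eq_or_lt with rfl | ht₀
  · rw [← Ioi_insert, continuousWithinAt_insert_self]
    exact tendsto_csInf_setOf_uPlusHeat_lt_one_nhdsGT_zero hv01 hvmono hvtop hvone
  · exact (continuousAt_csInf_setOf_uPlusHeat_lt_one hv01 hvmono hvtop hvone ht₀).continuousWithinAt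
end
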